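/- If a, b are perfect noncrossing matchings on n points such that no pair of nested arcs of a lies on the same circle of aw(b), then every circle of aw(b) consists of arcs of a of the form (i_1,i_2),(i_3,i_4),…,(i_{t−1},i_t) with i_1<i_2<⋯<i_t (pairwise unnested), together with arcs (i_2,i_3),…,(i_{t−2},i_{t−1}),(i_1,i_t) of b; and there exists a minimal sequence from a to b consisting entirely of → moves. -/

import Mathlib

/-- A noncrossing matching of type `(n-k, k)`: `k` pairwise-noncrossing arcs above a
horizontal line of `n` vertices (labelled `1,…,n`); the remaining `n-2k` vertices carry
rays, and no ray lies beneath an arc (every vertex strictly between the endpoints of an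
arc is an endpoint of some arc). -/
structure NCMatching (n k : ℕ) where
  arcs : Finset (ℕ × ℕ)
  card_arcs : arcs.card = k
  mem_range : ∀ p ∈ arcs, 1 ≤ p.1 ∧ p.1 < p.2 ∧ p.2 ≤ n
  endpoints_distinct : ∀ p ∈ arcs, ∀ q ∈ arcs, p ≠ q →
    p.1 ≠ q.1 ∧ p.1 ≠ q.2 ∧ p.2 ≠ q.1 ∧ p.2 ≠ q.2
  noncross : ∀ p ∈ arcs, ∀ q ∈ arcs, ¬ (p.1 < q.1 ∧ q.1 < p.2 ∧ p.2 < q.2)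
  no_ray_under : ∀ p ∈ arcs, ∀ r, p.1 < r → r < p.2 → ∃ q ∈ arcs, r = q.1 ∨ r = q.2

/-- Vertex `i` carries a ray of the matching `m`. -/
def NCMatching.IsRay {n k : ℕ} (m : NCMatching n k) (i : ℕ) : Prop :=
  1 ≤ i ∧ i ≤ n ∧ ∀ p ∈ m.arcs, p.1 ≠ i ∧ p.2 ≠ i

/-- The adjacency relation on vertices coming from the glued one-manifold `a w(b)`:
two vertices are related if an arc of `a` or an arc of (the reflection of) `b` joins them. -/
def glueRel {n k : ℕ} (a b : NCMatching n k) (i j : ℕ) : Prop :=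
  (i, j) ∈ a.arcs ∨ (j, i) ∈ a.arcs ∨ (i, j) ∈ b.arcs ∨ (j, i) ∈ b.arcs

/-- Two vertices lie on the same connected component of `a w(b)`. -/
def Conn {n k : ℕ} (a b : NCMatching n k) : ℕ → ℕ → Prop :=
  Relation.ReflTransGen (glueRel a b)

/-- The glue relation transported to `Fin n` (the vertex `i : Fin n` has label `i+1`). -/
def glueRelF {n k : ℕ} (a b : NCMatching n k) (i j : Fin n) : Prop :=
  glueRel a b ((i : ℕ) + 1) ((j : ℕ) + 1)

/-- `comps a b = |a w(b)|`, the number of connected components (circles and line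
segments) of the glued one-manifold `a w(b)`. -/
noncomputable def comps {n k : ℕ} (a b : NCMatching n k) : ℕ :=
  Nat.card (Quot (glueRelF a b))

/-- The elementary move `a → b`: either two unnested arcs `(i,j), (l,m)` of `a` are replaced
by the nested arcs `(i,m), (j,l)` on the same four vertices, or an arc-ray pair
`(i), (j,l)` with `i<j<l` is replaced by `(i,j), (l)`; the matchings agree elsewhere. -/
def Move {n k : ℕ} (a b : NCMatching n k) : Prop :=
  (∃ i j l m : ℕ, i < j ∧ j < l ∧ l < m ∧ (i, j) ∈ a.arcs ∧ (l, m) ∈ a.arcs ∧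
    b.arcs = insert (i, m) (insert (j, l) ((a.arcs.erase (i, j)).erase (l, m)))) ∨
  (∃ i j l : ℕ, i < j ∧ j < l ∧ a.IsRay i ∧ (j, l) ∈ a.arcs ∧
    b.arcs = insert (i, j) (a.arcs.erase (j, l)))

/-- A sequence of matchings in which each consecutive pair is related by `→` or `←`. -/
def IsMoveSeq {n k d : ℕ} (f : Fin (d + 1) → NCMatching n k) : Prop :=
  ∀ i : Fin d, Move (f i.castSucc) (f i.succ) ∨ Move (f i.succ) (f i.castSucc)

/-- The distance `d(a,b)`: the minimal number of moves `→` or `←` needed to go from `a` to `b`. -/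
noncomputable def mdist {n k : ℕ} (a b : NCMatching n k) : ℕ :=
  sInf {d : ℕ | ∃ f : Fin (d + 1) → NCMatching n k,
    f 0 = a ∧ f (Fin.last d) = b ∧ IsMoveSeq f}

/-!
A move changes the number of components of `a w(b)` by at most one, so any sequence of moves
from `a` to `b` has length at least `|b w(b)| - |a w(b)|`.

Conversely, let `(j, l)` be a shortest arc of `b` that is not an arc of `a`. Every arc of `a`
meeting the gap between `j` and `l` lies inside it, and since nested arcs of `a` never share a
circle, the arcs of `a` at `j` and `l` are `(x, j)` and `(l, z)`. The forward move
`(x, j), (l, z) → (x, z), (j, l)` splits the circle `{j, l}` off the circle of `x`, preserves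
the hypothesis, and gives `a` the arc `(j, l)` of `b` without removing any. Iterating gives a
sequence of `|b w(b)| - |a w(b)|` forward moves, and the shape of the arcs of `b` transfers
back along each move.
-/

open Relation NCMatching

namespace Relation

variable {α : Type*} {r s : α → α → Prop} {u w x y : α}

def AddEdge (r : α → α → Prop) (u w : α) (x y : α) : Prop :=
  r x y ∨ (x = u ∧ y = w)

theorem card_quot_congr (h : ∀ x y, EqvGen r x y ↔ EqvGen s x y) :
    Nat.card (Quot r) = Nat.card (Quot s) :=
  Nat.card_congr
    { toFun := Quot.lift (Quot.mk s) fun x y hr => Quot.eqvGen_sound ((h x y).1 (.rel _ _ hr))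
      invFun := Quot.lift (Quot.mk r) fun x y hs => Quot.eqvGen_sound ((h x y).2 (.rel _ _ hs))
      left_inv := fun q => Quot.inductionOn q fun _ => rfl
      right_inv := fun q => Quot.inductionOn q fun _ => rfl }

theorem eqvGen_addEdge_cases (h : EqvGen (AddEdge r u w) x y) :
    EqvGen r x y ∨ (EqvGen r x u ∧ EqvGen r w y) ∨ (EqvGen r x w ∧ EqvGen r u y) := by
  induction h with
  | rel x y hr =>
    rcases hr with hr | ⟨rfl, rfl⟩
    · exact .inl (.rel _ _ hr)
    · exact .inr (.inl ⟨.refl _, .refl _⟩)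
  | refl x => exact .inl (.refl x)
  | symm x y _ ih =>
    rcases ih with h | ⟨h1, h2⟩ | ⟨h1, h2⟩
    · exact .inl (.symm _ _ h)
    · exact .inr (.inr ⟨.symm _ _ h2, .symm _ _ h1⟩)
    · exact .inr (.inl ⟨.symm _ _ h2, .symm _ _ h1⟩)
  | trans x y z _ _ ih1 ih2 =>
    have := EqvGen.is_equivalence r
    rcases ih1 with h | ⟨h1, h2⟩ | ⟨h1, h2⟩ <;> rcases ih2 with h' | ⟨h1', h2'⟩ | ⟨h1', h2'⟩
    all_goals first
      | exact .inl (this.trans h h')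
      | exact .inr (.inl ⟨this.trans h h1', h2'⟩)
      | exact .inr (.inr ⟨this.trans h h1', h2'⟩)
      | exact .inr (.inl ⟨h1, this.trans h2 h'⟩)
      | exact .inr (.inr ⟨h1, this.trans h2 h'⟩)
      | exact .inl (this.trans h1 h2')
      | exact .inl (this.trans h1 (this.trans (this.symm (this.trans h2 h1')) h2'))

theorem card_quot_addEdge_of_eqvGen (h : EqvGen r u w) :
    Nat.card (Quot (AddEdge r u w)) = Nat.card (Quot r) := by
  refine card_quot_congr fun x y => ⟨fun hxy => ?_, EqvGen.mono (fun _ _ => Or.inl) x y⟩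
  have := EqvGen.is_equivalence r
  rcases eqvGen_addEdge_cases hxy with hxy | ⟨h1, h2⟩ | ⟨h1, h2⟩
  · exact hxy
  · exact this.trans h1 (this.trans h h2)
  · exact this.trans h1 (this.trans (this.symm h) h2)

theorem card_quot_addEdge_of_not_eqvGen [Finite α] (h : ¬ EqvGen r u w) :
    Nat.card (Quot r) = Nat.card (Quot (AddEdge r u w)) + 1 := by
  classical
  let φ : Quot r → Quot (AddEdge r u w) :=
    Quot.lift (Quot.mk _) fun x y hr => Quot.sound (.inl hr)
  have huw : φ (Quot.mk r u) = φ (Quot.mk r w) := Quot.sound (.inr ⟨rfl, rfl⟩)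
  have hne : Quot.mk r u ≠ Quot.mk r w := fun he => h (Quot.eqvGen_exact he)
  -- the new edge merges exactly the classes of `u` and `w`
  let f : Quot r → Option (Quot (AddEdge r u w)) := fun q =>
    if q = Quot.mk r w then none else some (φ q)
  have hf : Function.Bijective f := by
    refine ⟨fun q q' hq => ?_, fun o => ?_⟩
    · induction q using Quot.inductionOn with | h x => ?_
      induction q' using Quot.inductionOn with | h y => ?_
      by_cases hx : Quot.mk r x = Quot.mk r w <;> by_cases hy : Quot.mk r y = Quot.mk r w <;>
        simp only [f, hx, hy, if_true, if_false, reduceCtorEq, Option.some.injEq] at hq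
      · exact hx.trans hy.symm
      · rcases eqvGen_addEdge_cases (Quot.eqvGen_exact hq) with hxy | ⟨_, hwy⟩ | ⟨hxw, _⟩
        · exact Quot.eqvGen_sound hxy
        · exact absurd (Quot.eqvGen_sound (.symm _ _ hwy)) hy
        · exact absurd (Quot.eqvGen_sound hxw) hx
    · rcases o with _ | q
      · exact ⟨Quot.mk r w, if_pos rfl⟩
      · obtain ⟨x, rfl⟩ := Quot.exists_rep q
        by_cases hx : Quot.mk r x = Quot.mk r w
        · exact ⟨Quot.mk r u, by rw [← hx] at huw; simp only [f, if_neg hne, huw]; rfl⟩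
        · exact ⟨Quot.mk r x, by simp only [f, if_neg hx]; rfl⟩
  rw [Nat.card_eq_of_bijective f hf, Finite.card_option]

theorem eqvGen_le_of_rel_or_mem {K : Set α} {c : α} (hK : ∀ x ∈ K, EqvGen s c x)
    (h : ∀ x y, r x y → EqvGen s x y ∨ (x ∈ K ∧ y ∈ K)) : EqvGen r ≤ EqvGen s :=
  EqvGen.eqvGen_le fun x y hxy => (h x y hxy).elim id fun ⟨hx, hy⟩ =>
    .trans _ _ _ (.symm _ _ (hK x hx)) (hK y hy)

theorem card_quot_le_card_quot_addEdge_add_one [Finite α] :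
    Nat.card (Quot r) ≤ Nat.card (Quot (AddEdge r u w)) + 1 := by
  by_cases h : EqvGen r u w
  · rw [card_quot_addEdge_of_eqvGen h]; omega
  · rw [card_quot_addEdge_of_not_eqvGen h]

theorem card_quot_addEdge_le [Finite α] :
    Nat.card (Quot (AddEdge r u w)) ≤ Nat.card (Quot r) := by
  by_cases h : EqvGen r u w
  · rw [card_quot_addEdge_of_eqvGen h]
  · rw [card_quot_addEdge_of_not_eqvGen h]; omega

end Relation

namespace NCMatching

variable {n k m : ℕ}

theorem eq_of_mem_of_mem (a : NCMatching n k) {p q : ℕ × ℕ} (hp : p ∈ a.arcs) (hq : q ∈ a.arcs)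
    {c : ℕ} (hcp : c = p.1 ∨ c = p.2) (hcq : c = q.1 ∨ c = q.2) : p = q := by
  by_contra hne
  have := a.endpoints_distinct p hp q hq hne
  omega

theorem exists_fin_of_mem (a : NCMatching n k) {p : ℕ × ℕ} (hp : p ∈ a.arcs) :
    ∃ P Q : Fin n, p = ((P : ℕ) + 1, (Q : ℕ) + 1) := by
  have := a.mem_range p hp
  exact ⟨⟨p.1 - 1, by omega⟩, ⟨p.2 - 1, by omega⟩, Prod.ext (by simp; omega) (by simp; omega)⟩

theorem ext_arcs {a b : NCMatching n k} (h : a.arcs = b.arcs) : a = b := by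
  cases a; cases b; simp_all

theorem nested_of_endpoint_mem (a : NCMatching n k) {s t : ℕ × ℕ} (hs : s ∈ a.arcs)
    (ht : t ∈ a.arcs) (hne : t ≠ s) (h : (s.1 < t.1 ∧ t.1 < s.2) ∨ (s.1 < t.2 ∧ t.2 < s.2)) :
    s.1 < t.1 ∧ t.2 < s.2 := by
  have := a.mem_range t ht
  have := a.endpoints_distinct t ht s hs hne
  have := a.noncross s hs t ht
  have := a.noncross t ht s hs
  omega

theorem exists_mem_of_perfect (a : NCMatching (2 * m) m) {c : ℕ} (h1 : 1 ≤ c) (h2 : c ≤ 2 * m) :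
    ∃ p ∈ a.arcs, c = p.1 ∨ c = p.2 := by
  classical
  let E : Finset ℕ := a.arcs.biUnion fun p => {p.1, p.2}
  have hE : E = Finset.Icc 1 (2 * m) := by
    refine Finset.eq_of_subset_of_card_le (fun x hx => ?_) ?_
    · simp only [E, Finset.mem_biUnion, Finset.mem_insert, Finset.mem_singleton] at hx
      obtain ⟨p, hp, hx⟩ := hx
      have := a.mem_range p hp
      simp only [Finset.mem_Icc]
      omega
    · rw [Finset.card_biUnion, Nat.card_Icc]
      · rw [Finset.sum_congr rfl (g := fun _ => 2), Finset.sum_const, a.card_arcs, smul_eq_mul]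
        · omega
        intro p hp
        have := (a.mem_range p hp).2.1
        rw [Finset.card_pair (by omega)]
      · intro p hp q hq hne
        have := a.endpoints_distinct p hp q hq hne
        simp only [Finset.disjoint_insert_left, Finset.disjoint_singleton_left,
          Finset.mem_insert, Finset.mem_singleton]
        omega
  have hc : c ∈ E := by rw [hE, Finset.mem_Icc]; omega
  simpa [E] using hc

theorem not_isRay (a : NCMatching (2 * m) m) (i : ℕ) : ¬ a.IsRay i := by
  rintro ⟨h1, h2, h3⟩
  obtain ⟨p, hp, hc⟩ := a.exists_mem_of_perfect h1 h2
  have := h3 p hp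
  omega

variable {a : NCMatching n k} {x j l z : ℕ}

def IooClosed (a : NCMatching n k) (j l : ℕ) : Prop :=
  ∀ s ∈ a.arcs, (j < s.1 ∧ s.1 < l) ∨ (j < s.2 ∧ s.2 < l) → j < s.1 ∧ s.2 < l

theorem iooClosed_of_mem (h : (j, l) ∈ a.arcs) : a.IooClosed j l := by
  intro s hs hsjl
  by_cases hne : s = (j, l)
  · subst hne
    omega
  · exact a.nested_of_endpoint_mem h hs hne hsjl

def nestArcs (a : NCMatching n k) (x j l z : ℕ) : Finset (ℕ × ℕ) :=
  insert (x, z) (insert (j, l) ((a.arcs.erase (x, j)).erase (l, z)))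

theorem mem_nestArcs {t : ℕ × ℕ} : t ∈ a.nestArcs x j l z ↔
    t = (x, z) ∨ t = (j, l) ∨ (t ∈ a.arcs ∧ t ≠ (x, j) ∧ t ≠ (l, z)) := by
  simp only [nestArcs, Finset.mem_insert, Finset.mem_erase]
  tauto

section Nest

variable (hxj : (x, j) ∈ a.arcs) (hlz : (l, z) ∈ a.arcs) (hjl : j < l)
include hxj hlz hjl

theorem card_nestArcs : (a.nestArcs x j l z).card = k := by
  have hrx := a.mem_range _ hxj
  have hrz := a.mem_range _ hlz
  have hxz : (x, z) ∉ a.arcs := fun h => by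
    have := a.eq_of_mem_of_mem h hxj (c := x) (by simp) (by simp)
    simp only [Prod.mk.injEq] at this hrx hrz
    omega
  have hjl' : (j, l) ∉ a.arcs := fun h => by
    have := a.eq_of_mem_of_mem h hxj (c := j) (by simp) (by simp)
    simp only [Prod.mk.injEq] at this hrx
    omega
  have hlz' : (l, z) ∈ a.arcs.erase (x, j) := Finset.mem_erase.2 ⟨by simp; omega, hlz⟩
  rw [nestArcs, Finset.card_insert_of_notMem, Finset.card_insert_of_notMem,
    Finset.card_erase_of_mem hlz', Finset.card_erase_of_mem hxj, a.card_arcs]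
  · have := Finset.one_lt_card.2 ⟨_, hxj, _, hlz, by simp; omega⟩
    rw [a.card_arcs] at this
    omega
  · simp [hjl']
  · simp only [Finset.mem_insert, Prod.mk.injEq, Finset.mem_erase, hxz, and_false, or_false]
    omega

theorem nestArcs_mem_range : ∀ p ∈ a.nestArcs x j l z, 1 ≤ p.1 ∧ p.1 < p.2 ∧ p.2 ≤ n := by
  have := a.mem_range _ hxj
  have := a.mem_range _ hlz
  intro p hp
  rcases mem_nestArcs.1 hp with rfl | rfl | ⟨hp, -, -⟩
  · simp only at *
    omega
  · simp only at *
    omega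
  · exact a.mem_range p hp

theorem nestArcs_endpoints_distinct : ∀ p ∈ a.nestArcs x j l z, ∀ q ∈ a.nestArcs x j l z, p ≠ q →
    p.1 ≠ q.1 ∧ p.1 ≠ q.2 ∧ p.2 ≠ q.1 ∧ p.2 ≠ q.2 := by
  have := a.mem_range _ hxj
  have := a.mem_range _ hlz
  have hold : ∀ t ∈ a.arcs, t ≠ (x, j) → t ≠ (l, z) → t.1 ≠ x ∧ t.1 ≠ j ∧ t.1 ≠ l ∧ t.1 ≠ z ∧
      t.2 ≠ x ∧ t.2 ≠ j ∧ t.2 ≠ l ∧ t.2 ≠ z := fun t ht h1 h2 => by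
    have := a.endpoints_distinct t ht _ hxj h1
    have := a.endpoints_distinct t ht _ hlz h2
    simp only at *
    omega
  intro p hp q hq hpq
  rcases mem_nestArcs.1 hp with rfl | rfl | ⟨hp, hp1, hp2⟩ <;>
    rcases mem_nestArcs.1 hq with rfl | rfl | ⟨hq, hq1, hq2⟩
  all_goals first
    | exact absurd rfl hpq
    | exact a.endpoints_distinct p hp q hq hpq
    | (have := hold q hq hq1 hq2; simp only at *; omega)
    | (have := hold p hp hp1 hp2; simp only at *; omega)
    | (simp only at *; omega)

theorem nestArcs_noncross (hgap : a.IooClosed j l) : ∀ p ∈ a.nestArcs x j l z,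
    ∀ q ∈ a.nestArcs x j l z, ¬ (p.1 < q.1 ∧ q.1 < p.2 ∧ p.2 < q.2) := by
  have := a.mem_range _ hxj
  have := a.mem_range _ hlz
  have hxz : ∀ t ∈ a.arcs, t ≠ (x, j) → t ≠ (l, z) →
      (x < t.1 ∧ t.1 < z) ∨ (x < t.2 ∧ t.2 < z) → x < t.1 ∧ t.2 < z := by
    intro t ht h1 h2
    have := a.endpoints_distinct t ht _ hxj h1
    have := a.endpoints_distinct t ht _ hlz h2
    have := a.nested_of_endpoint_mem hxj ht h1
    have := a.nested_of_endpoint_mem hlz ht h2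
    have := hgap t ht
    have := a.mem_range t ht
    simp only at *
    omega
  intro p hp q hq
  rcases mem_nestArcs.1 hp with rfl | rfl | ⟨hp, hp1, hp2⟩ <;>
    rcases mem_nestArcs.1 hq with rfl | rfl | ⟨hq, hq1, hq2⟩
  all_goals first
    | exact a.noncross p hp q hq
    | (have := hxz q hq hq1 hq2; have := hgap q hq; simp only at *; omega)
    | (have := hxz p hp hp1 hp2; have := hgap p hp; simp only at *; omega)
    | (simp only at *; omega)

end Nest

section Perfect

variable {a : NCMatching (2 * m) m}

theorem nestArcs_no_ray_under (hxj : (x, j) ∈ a.arcs) (hlz : (l, z) ∈ a.arcs) (hjl : j < l) :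
    ∀ p ∈ a.nestArcs x j l z, ∀ r, p.1 < r → r < p.2 →
      ∃ q ∈ a.nestArcs x j l z, r = q.1 ∨ r = q.2 := by
  intro p hp r h1 h2
  have := nestArcs_mem_range hxj hlz hjl p hp
  obtain ⟨t, ht, hrt⟩ := a.exists_mem_of_perfect (c := r) (by omega) (by omega)
  by_cases htxj : t = (x, j)
  · subst htxj
    exact hrt.elim (fun h => ⟨_, mem_nestArcs.2 (.inl rfl), .inl h⟩)
      (fun h => ⟨_, mem_nestArcs.2 (.inr (.inl rfl)), .inl h⟩)
  by_cases htlz : t = (l, z)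
  · subst htlz
    exact hrt.elim (fun h => ⟨_, mem_nestArcs.2 (.inr (.inl rfl)), .inr h⟩)
      (fun h => ⟨_, mem_nestArcs.2 (.inl rfl), .inr h⟩)
  exact ⟨t, mem_nestArcs.2 (.inr (.inr ⟨ht, htxj, htlz⟩)), hrt⟩

def nest (a : NCMatching (2 * m) m) (hxj : (x, j) ∈ a.arcs) (hlz : (l, z) ∈ a.arcs)
    (hjl : j < l) (hgap : a.IooClosed j l) : NCMatching (2 * m) m where
  arcs := a.nestArcs x j l z
  card_arcs := card_nestArcs hxj hlz hjl
  mem_range := nestArcs_mem_range hxj hlz hjl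
  endpoints_distinct := nestArcs_endpoints_distinct hxj hlz hjl
  noncross := nestArcs_noncross hxj hlz hjl hgap
  no_ray_under := nestArcs_no_ray_under hxj hlz hjl

theorem move_nest (hxj : (x, j) ∈ a.arcs) (hlz : (l, z) ∈ a.arcs) (hjl : j < l)
    (hgap : a.IooClosed j l) : Move a (a.nest hxj hlz hjl hgap) :=
  .inl ⟨x, j, l, z, (a.mem_range _ hxj).2.1, hjl, (a.mem_range _ hlz).2.1, hxj, hlz, rfl⟩

end Perfect

end NCMatching

section Gluing

variable {n k : ℕ} {a b : NCMatching n k} {c d u v : ℕ}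

theorem glueRel_symm (h : glueRel a b c d) : glueRel a b d c := by
  unfold glueRel at *
  tauto

theorem glueRel.exists_arc (h : glueRel a b c d) :
    ∃ e, (e ∈ a.arcs ∨ e ∈ b.arcs) ∧ ((c = e.1 ∧ d = e.2) ∨ (c = e.2 ∧ d = e.1)) := by
  rcases h with h | h | h | h
  exacts [⟨_, .inl h, .inl ⟨rfl, rfl⟩⟩, ⟨_, .inl h, .inr ⟨rfl, rfl⟩⟩,
    ⟨_, .inr h, .inl ⟨rfl, rfl⟩⟩, ⟨_, .inr h, .inr ⟨rfl, rfl⟩⟩]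

theorem glueRel.mem_Icc (h : glueRel a b c d) : 1 ≤ d ∧ d ≤ n := by
  obtain ⟨e, he, hce⟩ := h.exists_arc
  have := (he.elim (a.mem_range e) (b.mem_range e))
  omega

theorem conn_iff_eqvGen : Conn a b c d ↔ EqvGen (glueRel a b) c d := by
  have : Std.Symm (glueRel a b) := ⟨fun _ _ => glueRel_symm⟩
  rw [Conn, EqvGen.eqvGen_eq_reflTransGen]

theorem Conn.symm (h : Conn a b c d) : Conn a b d c :=
  conn_iff_eqvGen.2 (.symm _ _ (conn_iff_eqvGen.1 h))

theorem Conn.trans (h : Conn a b c d) (h' : Conn a b d u) : Conn a b c u :=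
  ReflTransGen.trans h h'

theorem conn_of_mem_left {p : ℕ × ℕ} (hp : p ∈ a.arcs) : Conn a b p.1 p.2 :=
  .single (.inl hp)

theorem conn_of_mem_right {p : ℕ × ℕ} (hp : p ∈ b.arcs) : Conn a b p.1 p.2 :=
  .single (.inr (.inr (.inl hp)))

theorem Conn.of_closed {S : ℕ → Prop} (hS : ∀ c d, S c → glueRel a b c d → S d)
    (hu : S u) (h : Conn a b u v) : S v := by
  induction h with
  | refl => exact hu
  | tail _ hstep ih => exact hS _ _ ih hstep

theorem conn_of_mem_inter {p : ℕ × ℕ} (hpa : p ∈ a.arcs) (hpb : p ∈ b.arcs)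
    (h : Conn a b p.1 v) : v = p.1 ∨ v = p.2 := by
  refine Conn.of_closed (S := fun v => v = p.1 ∨ v = p.2) (fun c d hc hcd => ?_) (.inl rfl) h
  obtain ⟨e, he, hce⟩ := hcd.exists_arc
  have hep : e = p := he.elim (a.eq_of_mem_of_mem · hpa (by omega) hc)
    (b.eq_of_mem_of_mem · hpb (by omega) hc)
  subst hep
  omega

theorem eqvGen_glueRelF_iff {X Y : Fin n} :
    EqvGen (glueRelF a b) X Y ↔ Conn a b (X + 1) (Y + 1) := by
  refine ⟨fun h => ?_, fun h => ?_⟩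
  · induction h with
    | rel _ _ h => exact .single h
    | refl => exact .refl
    | symm _ _ _ ih => exact ih.symm
    | trans _ _ _ _ _ ih ih' => exact ih.trans ih'
  · suffices ∀ d, Conn a b (X + 1) d → ∀ Y : Fin n, d = Y + 1 → EqvGen (glueRelF a b) X Y from
      this _ h Y rfl
    intro d hd
    induction hd with
    | refl => exact fun Y hY => by rw [Fin.ext (by omega : (X : ℕ) = Y)]; exact .refl _
    | @tail c d _ hcd ih =>
      intro Y hY
      have := (glueRel_symm hcd).mem_Icc
      have hC : c = (⟨c - 1, by omega⟩ : Fin n) + 1 := by simp only; omega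
      refine .trans _ _ _ (ih _ hC) (.rel _ _ ?_)
      simpa only [glueRelF, ← hC, ← hY] using hcd

end Gluing

section MoveCount

variable {n k : ℕ}

theorem glueRelF_or_of_arcs_subset {u v b : NCMatching n k} {P Q R S X Y : Fin n}
    (huv : ∀ p ∈ u.arcs, p ≠ ((P : ℕ) + 1, (Q : ℕ) + 1) → p ≠ ((R : ℕ) + 1, (S : ℕ) + 1) →
      p ∈ v.arcs)
    (h : glueRelF u b X Y) :
    glueRelF v b X Y ∨ ((X = P ∨ X = Q ∨ X = R ∨ X = S) ∧ (Y = P ∨ Y = Q ∨ Y = R ∨ Y = S)) := by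
  have harc : ∀ X Y : Fin n, ((X : ℕ) + 1, (Y : ℕ) + 1) ∈ u.arcs →
      ((X : ℕ) + 1, (Y : ℕ) + 1) ∈ v.arcs ∨
        ((X = P ∨ X = Q ∨ X = R ∨ X = S) ∧ (Y = P ∨ Y = Q ∨ Y = R ∨ Y = S)) := by
    intro X Y hXY
    by_cases hX : ((X : ℕ) + 1, (Y : ℕ) + 1) = ((P : ℕ) + 1, (Q : ℕ) + 1) ∨
        ((X : ℕ) + 1, (Y : ℕ) + 1) = ((R : ℕ) + 1, (S : ℕ) + 1)
    · simp only [Prod.mk.injEq, add_left_inj, Fin.val_inj] at hX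
      tauto
    · rw [not_or] at hX
      exact .inl (huv _ hXY hX.1 hX.2)
  rcases h with h | h | h | h
  · exact (harc X Y h).imp_left .inl
  · exact (harc Y X h).imp (.inr ∘ .inl) And.symm
  · exact .inl (.inr (.inr (.inl h)))
  · exact .inl (.inr (.inr (.inr h)))

/-- In both relations `I, J, L, M` lie in one class, and all other generators are shared. -/
theorem card_quot_addEdge_resmooth {u v b : NCMatching n k} {I J L M : Fin n}
    (hIJ : ((I : ℕ) + 1, (J : ℕ) + 1) ∈ u.arcs) (hLM : ((L : ℕ) + 1, (M : ℕ) + 1) ∈ u.arcs)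
    (hv : v.arcs = u.nestArcs (I + 1) (J + 1) (L + 1) (M + 1)) :
    Nat.card (Quot (AddEdge (glueRelF u b) I M)) =
      Nat.card (Quot (AddEdge (glueRelF v b) I J)) := by
  have hIM : ((I : ℕ) + 1, (M : ℕ) + 1) ∈ v.arcs := by simp [hv, mem_nestArcs]
  have hJL : ((J : ℕ) + 1, (L : ℕ) + 1) ∈ v.arcs := by simp [hv, mem_nestArcs]
  let K : Set (Fin n) := {X | X = I ∨ X = J ∨ X = L ∨ X = M}
  refine card_quot_congr fun X Y => ⟨fun h => ?_, fun h => ?_⟩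
  · refine eqvGen_le_of_rel_or_mem (K := K) (c := I) ?_ ?_ X Y h
    · have hJ : EqvGen (AddEdge (glueRelF v b) I J) I J := .rel _ _ (.inr ⟨rfl, rfl⟩)
      rintro _ (rfl | rfl | rfl | rfl)
      · exact .refl _
      · exact hJ
      · exact .trans _ _ _ hJ (.rel _ _ (.inl (.inl hJL)))
      · exact .rel _ _ (.inl (.inl hIM))
    · rintro X Y (hXY | ⟨rfl, rfl⟩)
      · refine (glueRelF_or_of_arcs_subset (fun p hp h1 h2 => ?_) hXY).imp (.rel _ _ ∘ .inl) id
        simp [hv, mem_nestArcs, hp, h1, h2]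
      · exact .inl (.rel _ _ (.inl (.inl hIM)))
  · refine eqvGen_le_of_rel_or_mem (K := K) (c := I) ?_ ?_ X Y h
    · have hM : EqvGen (AddEdge (glueRelF u b) I M) I M := .rel _ _ (.inr ⟨rfl, rfl⟩)
      rintro _ (rfl | rfl | rfl | rfl)
      · exact .refl _
      · exact .rel _ _ (.inl (.inl hIJ))
      · exact .trans _ _ _ hM (.symm _ _ (.rel _ _ (.inl (.inl hLM))))
      · exact hM
    · rintro X Y (hXY | ⟨rfl, rfl⟩)
      · refine (glueRelF_or_of_arcs_subset (P := I) (Q := M) (R := J) (S := L)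
          (fun p hp h1 h2 => ?_) hXY).imp (.rel _ _ ∘ .inl) ?_
        · simp only [hv, mem_nestArcs, h1, h2, false_or] at hp
          exact hp.1
        · simp only [K, Set.mem_ofPred_eq]
          tauto
      · exact .inl (.rel _ _ (.inl (.inl hIJ)))

theorem exists_card_quot_addEdge_resmooth {u v b : NCMatching n k} {x j l z : ℕ}
    (hxj : (x, j) ∈ u.arcs) (hlz : (l, z) ∈ u.arcs) (hv : v.arcs = u.nestArcs x j l z) :
    ∃ X J Z : Fin n, (X : ℕ) + 1 = x ∧ (J : ℕ) + 1 = j ∧ (Z : ℕ) + 1 = z ∧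
      Nat.card (Quot (AddEdge (glueRelF u b) X Z)) =
        Nat.card (Quot (AddEdge (glueRelF v b) X J)) := by
  obtain ⟨X, J, hXJ⟩ := u.exists_fin_of_mem hxj
  obtain ⟨L, Z, hLZ⟩ := u.exists_fin_of_mem hlz
  simp only [Prod.mk.injEq] at hXJ hLZ
  obtain ⟨rfl, rfl⟩ := hXJ
  obtain ⟨rfl, rfl⟩ := hLZ
  exact ⟨X, J, Z, rfl, rfl, rfl, card_quot_addEdge_resmooth hxj hlz hv⟩

theorem comps_le_of_move {m : ℕ} {u v b : NCMatching (2 * m) m} (h : Move u v) :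
    comps u b ≤ comps v b + 1 ∧ comps v b ≤ comps u b + 1 := by
  rcases h with ⟨x, j, l, z, -, -, -, hxj, hlz, hv⟩ | ⟨i, -, -, -, -, hi, -⟩
  · obtain ⟨X, J, Z, -, -, -, h⟩ := exists_card_quot_addEdge_resmooth (b := b) hxj hlz hv
    have hu₁ := card_quot_le_card_quot_addEdge_add_one (r := glueRelF u b) (u := X) (w := Z)
    have hu₂ := card_quot_addEdge_le (r := glueRelF u b) (u := X) (w := Z)
    have hv₁ := card_quot_le_card_quot_addEdge_add_one (r := glueRelF v b) (u := X) (w := J)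
    have hv₂ := card_quot_addEdge_le (r := glueRelF v b) (u := X) (w := J)
    unfold comps
    omega
  · exact absurd hi (u.not_isRay i)

end MoveCount

section Circles

variable {n k : ℕ}

def NoNestedConn (a b : NCMatching n k) : Prop :=
  ∀ p ∈ a.arcs, ∀ q ∈ a.arcs, p ≠ q → (p.1 < q.1 ∧ q.2 < p.2) → ¬ Conn a b p.1 q.1

/-- The arcs `(i₂, i₃), …, (i_{t-2}, i_{t-1})` of the informal statement. -/
def IsGapArc (a b : NCMatching n k) (q : ℕ × ℕ) : Prop :=
  (∃ p ∈ a.arcs, q.1 = p.2) ∧ (∃ r ∈ a.arcs, q.2 = r.1) ∧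
    ¬ ∃ s ∈ a.arcs, Conn a b q.1 s.1 ∧ q.1 < s.1 ∧ s.2 < q.2

/-- The arc `(i₁, i_t)` of the informal statement. -/
def IsOuterArc (a b : NCMatching n k) (q : ℕ × ℕ) : Prop :=
  (∃ p ∈ a.arcs, q.1 = p.1) ∧ (∃ r ∈ a.arcs, q.2 = r.2) ∧
    ∀ v : ℕ, Conn a b q.1 v → q.1 ≤ v ∧ v ≤ q.2

def GapOrOuter (a b : NCMatching n k) : Prop :=
  ∀ q ∈ b.arcs, IsGapArc a b q ∨ IsOuterArc a b q

variable {a b : NCMatching n k} {j l w v : ℕ}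

theorem NoNestedConn.unnested (h : NoNestedConn a b) {p q : ℕ × ℕ} (hp : p ∈ a.arcs)
    (hq : q ∈ a.arcs) (hpq : Conn a b p.1 q.1) : p = q ∨ p.2 < q.1 ∨ q.2 < p.1 := by
  by_cases hne : p = q
  · exact .inl hne
  have hd := a.endpoints_distinct p hp q hq hne
  have := a.noncross p hp q hq
  have := a.noncross q hq p hp
  have := a.mem_range p hp
  have := a.mem_range q hq
  by_contra! hout
  rcases lt_or_gt_of_ne hd.1 with hlt | hlt
  · exact h p hp q hq hne (by omega) hpq
  · exact h q hq p hp (Ne.symm hne) (by omega) hpq.symm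

theorem NoNestedConn.of_forall (h : ∀ p ∈ a.arcs, ∀ c, p.1 < c → c < p.2 → ¬ Conn a b p.1 c) :
    NoNestedConn a b :=
  fun p hp _ _ _ hpq => h p hp _ hpq.1 (by have := a.mem_range; grind)

/-- The arc of `a` at `c` would be nested in `p`. -/
theorem NoNestedConn.not_conn {m : ℕ} {a b : NCMatching (2 * m) m} (h : NoNestedConn a b)
    {p : ℕ × ℕ} (hp : p ∈ a.arcs) {c : ℕ} (h1 : p.1 < c) (h2 : c < p.2) : ¬ Conn a b p.1 c := by
  intro hc
  have := a.mem_range p hp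
  obtain ⟨t, ht, hct⟩ := a.exists_mem_of_perfect (c := c) (by omega) (by omega)
  have htp : t ≠ p := by rintro rfl; omega
  have := a.nested_of_endpoint_mem hp ht htp (by omega)
  refine h p hp t ht htp.symm this (hc.trans ?_)
  rcases hct with rfl | rfl
  exacts [.refl, (conn_of_mem_left ht).symm]

theorem Conn.mem_Ioo (ha : a.IooClosed j l) (hb : b.IooClosed j l) (hw : j < w ∧ w < l)
    (h : Conn a b w v) : j < v ∧ v < l := by
  refine Conn.of_closed (S := fun v => j < v ∧ v < l) (fun c d hc hcd => ?_) hw h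
  obtain ⟨e, he, hce⟩ := hcd.exists_arc
  have := he.elim (a.mem_range e) (b.mem_range e)
  have := he.elim (ha e) (hb e)
  omega

end Circles

section InnermostNewArc

variable {m : ℕ} {a b : NCMatching (2 * m) m} {j l : ℕ}

/-- A shortest arc of `b` missing from `a`: every arc of `b` inside it is also an arc of `a`,
so the arcs of `a` meeting the gap are those arcs. -/
theorem exists_iooClosed_of_arcs_ne (h : a.arcs ≠ b.arcs) :
    ∃ j l, (j, l) ∈ b.arcs ∧ (j, l) ∉ a.arcs ∧ a.IooClosed j l := by
  have hne : (b.arcs \ a.arcs).Nonempty := by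
    rw [Finset.sdiff_nonempty]
    exact fun hba => h (Finset.eq_of_subset_of_card_le hba (by rw [a.card_arcs, b.card_arcs])).symm
  obtain ⟨⟨j, l⟩, hjl, hmin⟩ := Finset.exists_min_image _ (fun p => p.2 - p.1) hne
  rw [Finset.mem_sdiff] at hjl
  refine ⟨j, l, hjl.1, hjl.2, fun s hs hsjl => ?_⟩
  have := b.mem_range _ hjl.1
  obtain ⟨w, hw, hwjl⟩ : ∃ w, (w = s.1 ∨ w = s.2) ∧ j < w ∧ w < l := by
    rcases hsjl with h | h
    exacts [⟨_, .inl rfl, h⟩, ⟨_, .inr rfl, h⟩]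
  obtain ⟨e, he, hwe⟩ := b.exists_mem_of_perfect (c := w) (by simp at this; omega) (by omega)
  have hej : e ≠ (j, l) := by rintro rfl; simp at hwe; omega
  have hin := b.nested_of_endpoint_mem hjl.1 he hej (by simp only; omega)
  have hea : e ∈ a.arcs := by
    by_contra hea
    have := hmin e (Finset.mem_sdiff.2 ⟨he, hea⟩)
    have := b.mem_range e he
    simp only at *
    omega
  obtain rfl := a.eq_of_mem_of_mem hs hea hw hwe
  exact hin

variable (h : NoNestedConn a b) (hjl : (j, l) ∈ b.arcs) (hjla : (j, l) ∉ a.arcs)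
  (hgap : a.IooClosed j l)
include h hjl hjla hgap

theorem exists_arc_ending_at : ∃ x, (x, j) ∈ a.arcs := by
  have := b.mem_range _ hjl
  simp only at this
  obtain ⟨⟨y, y'⟩, hp, hjy⟩ := a.exists_mem_of_perfect (c := j) (by omega) (by omega)
  simp only at hjy
  rcases hjy with rfl | rfl
  swap
  · exact ⟨y, hp⟩
  exfalso
  have := a.mem_range _ hp
  simp only at this
  have hy'l : y' ≠ l := by rintro rfl; exact hjla hp
  have hly' : l < y' := by
    by_contra
    have := hgap _ hp (.inr (by simp only; omega))
    simp only at this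
    omega
  obtain ⟨q, hq, hlq⟩ := a.exists_mem_of_perfect (c := l) (by omega) (by omega)
  have hqp : q ≠ (j, y') := by rintro rfl; simp only at hlq; omega
  have hin := a.nested_of_endpoint_mem hp hq hqp (by simp only; omega)
  have hql : q.1 = l := by
    by_contra
    have := a.mem_range q hq
    have := hgap q hq (.inl (by simp only at hin; omega))
    omega
  exact h _ hp q hq hqp.symm hin (hql ▸ conn_of_mem_right hjl)

theorem exists_arc_starting_at {x : ℕ} (hxj : (x, j) ∈ a.arcs) : ∃ z, (l, z) ∈ a.arcs := by
  have := b.mem_range _ hjl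
  have := a.mem_range _ hxj
  simp only at *
  obtain ⟨⟨y, y'⟩, hq, hly⟩ := a.exists_mem_of_perfect (c := l) (by omega) (by omega)
  simp only at hly
  rcases hly with rfl | rfl
  · exact ⟨y', hq⟩
  exfalso
  have := a.mem_range _ hq
  simp only at this
  have hyj : y ≠ j := by rintro rfl; exact hjla hq
  have hyj' : y < j := by
    by_contra
    have := hgap _ hq (.inl (by simp only; omega))
    simp only at this
    omega
  have hqx : (x, j) ≠ (y, l) := by simp only [ne_eq, Prod.mk.injEq]; omega
  have hin := a.nested_of_endpoint_mem hq hxj hqx (by simp only; omega)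
  exact h _ hq _ hxj hqx.symm hin
    ((conn_of_mem_left hq).trans ((conn_of_mem_right hjl).symm.trans (conn_of_mem_left hxj).symm))

end InnermostNewArc

section NestStep

variable {m : ℕ} {a a' b : NCMatching (2 * m) m} {x j l z c d : ℕ}

theorem mem_nest_iff (ha' : a'.arcs = a.nestArcs x j l z) {t : ℕ × ℕ} : t ∈ a'.arcs ↔
    t = (x, z) ∨ t = (j, l) ∨ (t ∈ a.arcs ∧ t ≠ (x, j) ∧ t ≠ (l, z)) := by
  rw [ha', mem_nestArcs]

theorem eq_or_eq_of_conn_nest (ha' : a'.arcs = a.nestArcs x j l z) (hjl : (j, l) ∈ b.arcs)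
    (h : Conn a' b j c) : c = j ∨ c = l :=
  conn_of_mem_inter (p := (j, l)) ((mem_nest_iff ha').2 (.inr (.inl rfl))) hjl h

theorem exists_mem_of_mem_nest (hxj : (x, j) ∈ a.arcs) (hlz : (l, z) ∈ a.arcs)
    (ha' : a'.arcs = a.nestArcs x j l z) {t : ℕ × ℕ} (ht : t ∈ a'.arcs) (htjl : t ≠ (j, l)) :
    (∃ s ∈ a.arcs, t.1 = s.1) ∧ (∃ s ∈ a.arcs, t.2 = s.2) := by
  rcases (mem_nest_iff ha').1 ht with rfl | rfl | ⟨ht, -, -⟩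
  exacts [⟨⟨_, hxj, rfl⟩, ⟨_, hlz, rfl⟩⟩, absurd rfl htjl, ⟨⟨t, ht, rfl⟩, ⟨t, ht, rfl⟩⟩]

theorem iooClosed_nest (hxj : (x, j) ∈ a.arcs) (hlz : (l, z) ∈ a.arcs)
    (ha' : a'.arcs = a.nestArcs x j l z) (hgap : a.IooClosed j l) : a'.IooClosed j l := by
  have := a.mem_range _ hxj
  have := a.mem_range _ hlz
  intro t ht htjl
  rcases (mem_nest_iff ha').1 ht with rfl | rfl | ⟨ht, -, -⟩
  · simp only at *
    omega
  · simp only at *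
    omega
  · exact hgap t ht htjl

theorem conn_of_mem_nest (hxj : (x, j) ∈ a.arcs) (hlz : (l, z) ∈ a.arcs) (hjl : (j, l) ∈ b.arcs)
    (ha' : a'.arcs = a.nestArcs x j l z) {t : ℕ × ℕ} (ht : t ∈ a'.arcs) : Conn a b t.1 t.2 := by
  rcases (mem_nest_iff ha').1 ht with rfl | rfl | ⟨ht, -, -⟩
  · exact (conn_of_mem_left hxj).trans ((conn_of_mem_right hjl).trans (conn_of_mem_left hlz))
  · exact conn_of_mem_right hjl
  · exact conn_of_mem_left ht

theorem conn_of_conn_nest (hxj : (x, j) ∈ a.arcs) (hlz : (l, z) ∈ a.arcs) (hjl : (j, l) ∈ b.arcs)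
    (ha' : a'.arcs = a.nestArcs x j l z) (h : Conn a' b c d) : Conn a b c d := by
  refine reflTransGen_closed (fun u v huv => ?_) _ _ h
  rcases huv with huv | huv | huv | huv
  · exact conn_of_mem_nest hxj hlz hjl ha' huv
  · exact (conn_of_mem_nest hxj hlz hjl ha' huv).symm
  · exact conn_of_mem_right huv
  · exact (conn_of_mem_right huv).symm

/-- `a w(b)` is `a' w(b)` with the edge `x j` added: this edge joins the circle `{j, l}` of
`a' w(b)` to the circle of `x`. -/
theorem conn_nest_cases (hjl : (j, l) ∈ b.arcs) (ha' : a'.arcs = a.nestArcs x j l z)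
    (h : Conn a b c d) :
    Conn a' b c d ∨ (Conn a' b c x ∧ (d = j ∨ d = l)) ∨ ((c = j ∨ c = l) ∧ Conn a' b x d) := by
  let E := EqvGen (AddEdge (glueRel a' b) x j)
  have hxj' : E x j := .rel _ _ (.inr ⟨rfl, rfl⟩)
  have hrel : ∀ {t}, t ∈ a'.arcs → E t.1 t.2 := fun ht => .rel _ _ (.inl (.inl ht))
  have harc : ∀ {t}, t ∈ a.arcs → E t.1 t.2 := by
    intro t ht
    by_cases h1 : t = (x, j)
    · exact h1 ▸ hxj'
    by_cases h2 : t = (l, z)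
    · subst h2
      refine .trans _ _ _ (.symm _ _ (hrel ((mem_nest_iff ha').2 (.inr (.inl rfl))))) ?_
      exact .trans _ _ _ (.symm _ _ hxj') (hrel ((mem_nest_iff ha').2 (.inl rfl)))
    · exact hrel ((mem_nest_iff ha').2 (.inr (.inr ⟨ht, h1, h2⟩)))
  have hE : E c d := by
    refine EqvGen.eqvGen_le (fun u v huv => ?_) c d (conn_iff_eqvGen.1 h)
    rcases huv with huv | huv | huv | huv
    · exact harc huv
    · exact .symm _ _ (harc huv)
    · exact .rel _ _ (.inl (.inr (.inr (.inl huv))))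
    · exact .rel _ _ (.inl (.inr (.inr (.inr huv))))
  rcases eqvGen_addEdge_cases hE with h | ⟨h1, h2⟩ | ⟨h1, h2⟩
  · exact .inl (conn_iff_eqvGen.2 h)
  · exact .inr (.inl ⟨conn_iff_eqvGen.2 h1, eq_or_eq_of_conn_nest ha' hjl (conn_iff_eqvGen.2 h2)⟩)
  · exact .inr (.inr ⟨eq_or_eq_of_conn_nest ha' hjl (conn_iff_eqvGen.2 h1).symm,
      conn_iff_eqvGen.2 h2⟩)

theorem comps_nest (hxj : (x, j) ∈ a.arcs) (hlz : (l, z) ∈ a.arcs) (hjl : (j, l) ∈ b.arcs)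
    (ha' : a'.arcs = a.nestArcs x j l z) : comps a' b = comps a b + 1 := by
  obtain ⟨X, J, Z, rfl, rfl, rfl, h⟩ := exists_card_quot_addEdge_resmooth (b := b) hxj hlz ha'
  have hxz : EqvGen (glueRelF a b) X Z := eqvGen_glueRelF_iff.2
    ((conn_of_mem_left hxj).trans ((conn_of_mem_right hjl).trans (conn_of_mem_left hlz)))
  have hxj' : ¬ EqvGen (glueRelF a' b) X J := fun hXJ => by
    have := (a.mem_range _ hxj).2.1
    have := (b.mem_range _ hjl).2.1
    dsimp only at *
    rcases eq_or_eq_of_conn_nest ha' hjl (eqvGen_glueRelF_iff.1 hXJ).symm with h | h <;> omega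
  unfold comps
  rw [card_quot_addEdge_of_not_eqvGen hxj', ← h, card_quot_addEdge_of_eqvGen hxz]

theorem not_conn_nest (h : NoNestedConn a b) (hgap : a.IooClosed j l) (hxj : (x, j) ∈ a.arcs)
    (hlz : (l, z) ∈ a.arcs) (hjl : (j, l) ∈ b.arcs) (ha' : a'.arcs = a.nestArcs x j l z)
    (h1 : x < c) (h2 : c < z) : ¬ Conn a' b x c := by
  intro hc
  have hxj' : x < j := (a.mem_range _ hxj).2.1
  have hlz' : l < z := (a.mem_range _ hlz).2.1
  have hjl' : j < l := (b.mem_range _ hjl).2.1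
  have hjx : ¬ Conn a' b j x := fun hjx => by
    have := eq_or_eq_of_conn_nest ha' hjl hjx
    omega
  rcases lt_trichotomy c j with hcj | rfl | hjc
  · exact h.not_conn hxj h1 hcj (conn_of_conn_nest hxj hlz hjl ha' hc)
  · exact hjx hc.symm
  rcases lt_trichotomy c l with hcl | rfl | hlc
  · have := hc.symm.mem_Ioo (iooClosed_nest hxj hlz ha' hgap) (iooClosed_of_mem hjl) ⟨hjc, hcl⟩
    omega
  · exact hjx ((conn_of_mem_left ((mem_nest_iff ha').2 (.inr (.inl rfl)))).trans hc.symm)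
  · refine h.not_conn hlz hlc h2 ?_
    exact (conn_of_mem_right hjl).symm.trans
      ((conn_of_mem_left hxj).symm.trans (conn_of_conn_nest hxj hlz hjl ha' hc))

theorem noNestedConn_nest (h : NoNestedConn a b) (hgap : a.IooClosed j l) (hxj : (x, j) ∈ a.arcs)
    (hlz : (l, z) ∈ a.arcs) (hjl : (j, l) ∈ b.arcs) (ha' : a'.arcs = a.nestArcs x j l z) :
    NoNestedConn a' b := by
  refine NoNestedConn.of_forall fun p hp c h1 h2 hc => ?_
  rcases (mem_nest_iff ha').1 hp with rfl | rfl | ⟨hp, -, -⟩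
  · exact not_conn_nest h hgap hxj hlz hjl ha' h1 h2 hc
  · have := eq_or_eq_of_conn_nest ha' hjl hc
    simp only at *
    omega
  · exact h.not_conn hp h1 h2 (conn_of_conn_nest hxj hlz hjl ha' hc)

theorem isGapArc_of_innermost (hgap : a.IooClosed j l) (hxj : (x, j) ∈ a.arcs)
    (hlz : (l, z) ∈ a.arcs) (hjl : (j, l) ∈ b.arcs) : IsGapArc a b (j, l) := by
  refine ⟨⟨_, hxj, rfl⟩, ⟨_, hlz, rfl⟩, fun ⟨s, hs, hcs, h1, h2⟩ => ?_⟩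
  have := a.mem_range s hs
  have := hcs.symm.mem_Ioo hgap (iooClosed_of_mem hjl) ⟨h1, by simp only at *; omega⟩
  simp only at this
  omega

theorem isOuterArc_of_nest (hxj : (x, j) ∈ a.arcs) (hlz : (l, z) ∈ a.arcs)
    (hjl : (j, l) ∈ b.arcs) (ha' : a'.arcs = a.nestArcs x j l z) {q : ℕ × ℕ} (hq : q ∈ b.arcs)
    (hqjl : q ≠ (j, l)) (hout : IsOuterArc a' b q) : IsOuterArc a b q := by
  obtain ⟨⟨p, hp, hqp⟩, ⟨r, hr, hqr⟩, hbound⟩ := hout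
  have hd := b.endpoints_distinct q hq _ hjl hqjl
  simp only at hd
  obtain ⟨s, hs, hps⟩ := (exists_mem_of_mem_nest hxj hlz ha' hp (by rintro rfl; omega)).1
  obtain ⟨s', hs', hrs'⟩ := (exists_mem_of_mem_nest hxj hlz ha' hr (by rintro rfl; omega)).2
  refine ⟨⟨s, hs, hqp.trans hps⟩, ⟨s', hs', hqr.trans hrs'⟩, fun v hv => ?_⟩
  rcases conn_nest_cases hjl ha' hv with hv | ⟨hqx, hv⟩ | ⟨hq1, -⟩
  · exact hbound v hv
  · have := hbound x hqx
    have := hbound z (hqx.trans (conn_of_mem_left ((mem_nest_iff ha').2 (.inl rfl))))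
    have := (a.mem_range _ hxj).2.1
    have := (a.mem_range _ hlz).2.1
    have := (b.mem_range _ hjl).2.1
    simp only at *
    omega
  · omega

theorem conn_nest_x_of_conn (hxj : (x, j) ∈ a.arcs) (hlz : (l, z) ∈ a.arcs)
    (hjl : (j, l) ∈ b.arcs) (ha' : a'.arcs = a.nestArcs x j l z) (hcj : c ≠ j) (hcl : c ≠ l)
    {s : ℕ × ℕ} (hs : s ∈ a.arcs) (hcs : Conn a b c s.1) (hs' : s ∈ a'.arcs → ¬ Conn a' b c s.1) :
    Conn a' b c x ∧ (s = (x, j) ∨ s = (l, z)) := by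
  rcases conn_nest_cases hjl ha' hcs with hcs | ⟨hcx, hs1 | hs1⟩ | ⟨hc | hc, -⟩
  · by_cases hsxj : s = (x, j)
    · subst hsxj
      exact ⟨hcs, .inl rfl⟩
    by_cases hslz : s = (l, z)
    · subst hslz
      have := eq_or_eq_of_conn_nest ha' hjl
        ((conn_of_mem_left ((mem_nest_iff ha').2 (.inr (.inl rfl)))).trans hcs.symm)
      omega
    · exact absurd hcs (hs' ((mem_nest_iff ha').2 (.inr (.inr ⟨hs, hsxj, hslz⟩))))
  · have := a.eq_of_mem_of_mem hs hxj (c := j) (.inl hs1.symm) (.inr rfl)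
    subst this
    have := a.mem_range _ hxj
    simp only at *
    omega
  · exact ⟨hcx, .inr (a.eq_of_mem_of_mem hs hlz (c := l) (.inl hs1.symm) (.inl rfl))⟩
  all_goals omega

/-- The arc `(x, z)` of `a'` would lie between the ends of `q` on its circle. -/
theorem isGapArc_of_nest (h' : NoNestedConn a' b) (hxj : (x, j) ∈ a.arcs) (hlz : (l, z) ∈ a.arcs)
    (hjl : (j, l) ∈ b.arcs) (ha' : a'.arcs = a.nestArcs x j l z) {q : ℕ × ℕ} (hq : q ∈ b.arcs)
    (hqjl : q ≠ (j, l)) (hgap : IsGapArc a' b q) : IsGapArc a b q := by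
  obtain ⟨⟨p, hp, hqp⟩, ⟨r, hr, hqr⟩, hnone⟩ := hgap
  have hd := b.endpoints_distinct q hq _ hjl hqjl
  simp only at hd
  obtain ⟨s₁, hs₁, hps₁⟩ := (exists_mem_of_mem_nest hxj hlz ha' hp (by rintro rfl; omega)).2
  obtain ⟨s₂, hs₂, hrs₂⟩ := (exists_mem_of_mem_nest hxj hlz ha' hr (by rintro rfl; omega)).1
  refine ⟨⟨s₁, hs₁, hqp.trans hps₁⟩, ⟨s₂, hs₂, hqr.trans hrs₂⟩, fun ⟨s, hs, hcs, h1, h2⟩ => ?_⟩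
  have hxz : (x, z) ∈ a'.arcs := (mem_nest_iff ha').2 (.inl rfl)
  have hqx := conn_nest_x_of_conn hxj hlz hjl ha' hd.1 hd.2.1 hs hcs fun hs' hcs' =>
    hnone ⟨s, hs', hcs', h1, h2⟩
  have hout : ∀ c, Conn a' b x c → c ≤ x ∨ z ≤ c := fun c hc => by
    by_contra!
    exact h'.not_conn hxz this.1 this.2 hc
  have h1x := hout _ hqx.1.symm
  have h2x := hout _ (hqx.1.symm.trans (conn_of_mem_right hq))
  have hq1x : q.1 ≠ x := fun he => by
    have := a.eq_of_mem_of_mem hs₁ hxj (c := x) (.inr (he.symm.trans (hqp.trans hps₁)))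
      (.inl rfl)
    subst this
    omega
  have hq2z : q.2 ≠ z := fun he => by
    have := a.eq_of_mem_of_mem hs₂ hlz (c := z) (.inl (he.symm.trans (hqr.trans hrs₂)))
      (.inr rfl)
    subst this
    omega
  have := (a.mem_range _ hxj).2.1
  have := (a.mem_range _ hlz).2.1
  have := (b.mem_range _ hjl).2.1
  rcases hqx.2 with rfl | rfl <;> exact hnone ⟨_, hxz, hqx.1, by omega, by omega⟩

end NestStep

section ForwardSequence

variable {m : ℕ} {a a' b : NCMatching (2 * m) m} {x j l z : ℕ}

theorem gapOrOuter_self : GapOrOuter b b := by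
  refine fun q hq => .inr ⟨⟨q, hq, rfl⟩, ⟨q, hq, rfl⟩, fun v hv => ?_⟩
  have := b.mem_range q hq
  rcases conn_of_mem_inter hq hq hv with rfl | rfl <;> omega

theorem card_sdiff_nest (hxj : (x, j) ∈ a.arcs) (hlz : (l, z) ∈ a.arcs) (hjl : (j, l) ∈ b.arcs)
    (hjla : (j, l) ∉ a.arcs) (ha' : a'.arcs = a.nestArcs x j l z) :
    (b.arcs \ a'.arcs).card < (b.arcs \ a.arcs).card := by
  have := (a.mem_range _ hxj).2.1
  have := (a.mem_range _ hlz).2.1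
  have hxjb : (x, j) ∉ b.arcs := fun h => by
    have := b.eq_of_mem_of_mem h hjl (c := j) (by simp) (by simp)
    simp only [Prod.mk.injEq] at this
    omega
  have hlzb : (l, z) ∉ b.arcs := fun h => by
    have := b.eq_of_mem_of_mem h hjl (c := l) (by simp) (by simp)
    simp only [Prod.mk.injEq] at this
    omega
  refine Finset.card_lt_card ((Finset.ssubset_iff_of_subset fun t ht => ?_).2
    ⟨(j, l), Finset.mem_sdiff.2 ⟨hjl, hjla⟩,
      fun h => (Finset.mem_sdiff.1 h).2 ((mem_nest_iff ha').2 (.inr (.inl rfl)))⟩)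
  rw [Finset.mem_sdiff] at ht ⊢
  refine ⟨ht.1, fun hta => ht.2 ((mem_nest_iff ha').2 (.inr (.inr ⟨hta, ?_, ?_⟩)))⟩
  · rintro rfl
    exact hxjb ht.1
  · rintro rfl
    exact hlzb ht.1

/-- The forward move that creates a shortest arc of `b` missing from `a`. -/
theorem exists_forward_move (h : NoNestedConn a b) (hab : a ≠ b) :
    ∃ a', Move a a' ∧ NoNestedConn a' b ∧ comps a' b = comps a b + 1 ∧
      (b.arcs \ a'.arcs).card < (b.arcs \ a.arcs).card ∧ (GapOrOuter a' b → GapOrOuter a b) := by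
  obtain ⟨j, l, hjl, hjla, hgap⟩ := exists_iooClosed_of_arcs_ne fun h => hab (ext_arcs h)
  obtain ⟨x, hxj⟩ := exists_arc_ending_at h hjl hjla hgap
  obtain ⟨z, hlz⟩ := exists_arc_starting_at h hjl hjla hgap hxj
  let a' := a.nest hxj hlz (b.mem_range _ hjl).2.1 hgap
  have ha' : a'.arcs = a.nestArcs x j l z := rfl
  have h' := noNestedConn_nest h hgap hxj hlz hjl ha'
  refine ⟨a', move_nest .., h', comps_nest hxj hlz hjl ha', card_sdiff_nest hxj hlz hjl hjla ha',
    fun hq q hqb => ?_⟩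
  by_cases hqjl : q = (j, l)
  · exact hqjl ▸ .inl (isGapArc_of_innermost hgap hxj hlz hjl)
  · exact (hq q hqb).imp (isGapArc_of_nest h' hxj hlz hjl ha' hqb hqjl)
      (isOuterArc_of_nest hxj hlz hjl ha' hqb hqjl)

def moveRel (n k : ℕ) : SetRel (NCMatching n k) (NCMatching n k) :=
  {p | Move p.1 p.2}

theorem exists_forward_series (h : NoNestedConn a b) :
    GapOrOuter a b ∧ ∃ s : RelSeries (moveRel (2 * m) m),
      s.head = a ∧ s.last = b ∧ comps a b + s.length = comps b b := by
  induction hN : (b.arcs \ a.arcs).card using Nat.strong_induction_on generalizing a with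
  | _ N ih =>
    by_cases hab : a = b
    · subst hab
      exact ⟨gapOrOuter_self, RelSeries.singleton _ a, rfl, rfl, rfl⟩
    obtain ⟨a', hmove, h', hcomps, hlt, hback⟩ := exists_forward_move h hab
    obtain ⟨hgo, s, hs0, hsl, hlen⟩ := ih _ (hN ▸ hlt) h' rfl
    refine ⟨hback hgo, s.cons a (hs0 ▸ hmove), rfl, by simp [hsl], ?_⟩
    simp only [RelSeries.cons_length]
    omega

theorem comps_le_of_isMoveSeq {d : ℕ} {f : Fin (d + 1) → NCMatching (2 * m) m}
    (hf : IsMoveSeq f) (i : Fin (d + 1)) : comps (f i) b ≤ comps (f 0) b + i := by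
  induction i using Fin.induction with
  | zero => simp
  | succ i ih =>
    have : comps (f i.succ) b ≤ comps (f i.castSucc) b + 1 :=
      (hf i).elim (fun h => (comps_le_of_move h).2) (fun h => (comps_le_of_move h).1)
    simp only [Fin.val_castSucc, Fin.val_succ] at *
    omega

theorem mdist_eq_length {s : RelSeries (moveRel (2 * m) m)} (hs0 : s.head = a)
    (hsl : s.last = b) (hlen : comps a b + s.length = comps b b) : mdist a b = s.length := by
  have hs : s.length ∈ {d : ℕ | ∃ f : Fin (d + 1) → NCMatching (2 * m) m,
      f 0 = a ∧ f (Fin.last d) = b ∧ IsMoveSeq f} := ⟨s.toFun, hs0, hsl, fun i => .inl (s.step i)⟩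
  refine le_antisymm (Nat.sInf_le hs) (le_csInf ⟨_, hs⟩ ?_)
  rintro d ⟨f, hf0, hfl, hf⟩
  have := comps_le_of_isMoveSeq (b := b) hf (Fin.last d)
  rw [hf0, hfl, Fin.val_last] at this
  omega

end ForwardSequence

/-- If no pair of nested arcs of `a` lies on the same circle of `a w(b)`, then (1) the arcs
of `a` on any given component are pairwise unnested; (2) every arc of `b` either joins the
right endpoint of one `a`-arc of its component to the left endpoint of the next one (with
no `a`-arc of the component strictly between), or joins the leftmost and rightmost
vertices of its component; and (3) there is a minimal move sequence from `a` to `b`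
consisting entirely of forward moves `→`. -/
theorem no_nested_implies_forward_sequence (m : ℕ) (a b : NCMatching (2 * m) m)
    (h : ∀ p ∈ a.arcs, ∀ q ∈ a.arcs, p ≠ q → (p.1 < q.1 ∧ q.2 < p.2) → ¬ Conn a b p.1 q.1) :
    (∀ p ∈ a.arcs, ∀ q ∈ a.arcs, Conn a b p.1 q.1 → p = q ∨ p.2 < q.1 ∨ q.2 < p.1) ∧
    (∀ q ∈ b.arcs,
      ((∃ p ∈ a.arcs, q.1 = p.2) ∧ (∃ r ∈ a.arcs, q.2 = r.1) ∧
        ¬ ∃ s ∈ a.arcs, Conn a b q.1 s.1 ∧ q.1 < s.1 ∧ s.2 < q.2) ∨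
      ((∃ p ∈ a.arcs, q.1 = p.1) ∧ (∃ r ∈ a.arcs, q.2 = r.2) ∧
        ∀ v : ℕ, Conn a b q.1 v → q.1 ≤ v ∧ v ≤ q.2)) ∧
    (∃ f : Fin (mdist a b + 1) → NCMatching (2 * m) m,
      f 0 = a ∧ f (Fin.last (mdist a b)) = b ∧
      ∀ i : Fin (mdist a b), Move (f i.castSucc) (f i.succ)) := by
  obtain ⟨hgo, s, hs0, hsl, hlen⟩ := exists_forward_series h
  refine ⟨fun p hp q hq => NoNestedConn.unnested h hp hq, hgo, ?_⟩
  rw [mdist_eq_length hs0 hsl hlen]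
  exact ⟨s.toFun, hs0, hsl, s.step⟩
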